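/- Let f be an orientation-preserving homeomorphism of the circle T = R/Z whose rotation number ρ(f) is rational, and assume that f is not topologically conjugate to a rotation. Then h_pol(f) = 1. -/

import Mathlib

open Filter Metric Set

variable {Z : Type*} [MetricSpace Z]

/-- The dynamical metric `d_n^f(x,y) = max_{0 ≤ k ≤ n-1} d(f^k x, f^k y)`. -/
noncomputable def dynDist (f : Z → Z) (n : ℕ) (x y : Z) : ℝ :=
  ((Finset.range n).sup fun k => nndist (f^[k] x) (f^[k] y) : NNReal)

/-- `G_n^f(Y,ε)`: the minimal number of balls of radius `ε` for the metric `d_n^f`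
needed to cover `Y`. -/
noncomputable def coverNum (f : Z → Z) (n : ℕ) (Y : Set Z) (ε : ℝ) : ℕ :=
  sInf {m : ℕ | ∃ s : Finset Z, s.card = m ∧
    Y ⊆ ⋃ c ∈ s, {y : Z | dynDist f n c y ≤ ε}}

/-- The polynomial entropy of `f` on `Y`:
`h_pol(f,Y) = lim_{ε→0} limsup_{n→∞} log G_n^f(Y,ε) / log n`
(realized, by antitonicity in `ε`, as the supremum over `ε > 0`). -/
noncomputable def hpolOn (f : Z → Z) (Y : Set Z) : EReal :=
  ⨆ ε : {e : ℝ // 0 < e}, Filter.atTop.limsup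
    (fun n : ℕ => ((Real.log (coverNum f n Y ε.1) / Real.log n : ℝ) : EReal))

/-- The polynomial entropy of `f`. -/
noncomputable def hpol (f : Z → Z) : EReal := hpolOn f Set.univ

/-- The circle `𝕋 = ℝ/ℤ`. -/
abbrev Circle1 : Type := AddCircle (1 : ℝ)

/-- `f` is topologically conjugate to a rotation of the circle. -/
def ConjRotCircle (f : Circle1 ≃ₜ Circle1) : Prop :=
  ∃ (h : Circle1 ≃ₜ Circle1) (a : Circle1), ∀ x : Circle1, h (f (h.symm x)) = x + a

/-! Lift `f` to `F` with `F (x + 1) = F x + 1` and write `ρ = p / q`; then `G = F^q - p`, a lift of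
`f^q`, has a fixed point `a`. If `G` is the identity, averaging `F` over `q` iterates conjugates `f`
to the rotation by `p / q`. Otherwise `G` moves some point `b`.

Since `G` fixes `a` and `a + 1`, the `G⁻ᵏ`-preimages (`k ≤ n`) of a grid of mesh `ε` on `[a, a + 1]`
are `O(n)` points whose orbit segments `ε`-shadow every other one, so the covering numbers of `f^q`
grow at most linearly. The backward orbit of `b` moves monotonically towards a fixed point and never
returns near `b`, so its first `n` points are `(n, ε)`-separated and the covering numbers grow at
least linearly. Linear growth of the covering numbers of `f^q` gives `h_pol(f) = 1`. -/

open Topology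

section DynamicalDistance

variable {f : Z → Z} {m n q : ℕ} {x y : Z} {δ ε : ℝ}

def orbitSegment (f : Z → Z) (n : ℕ) (x : Z) : Fin n → Z := fun k => f^[k] x

theorem dynDist_eq_dist_orbitSegment (f : Z → Z) (n : ℕ) (x y : Z) :
    dynDist f n x y = dist (orbitSegment f n x) (orbitSegment f n y) := by
  rw [dynDist, dist_pi_def, ← Nat.Iio_eq_range, ← Fin.map_valEmbedding_univ, Finset.sup_map]
  rfl

theorem continuous_orbitSegment (hf : Continuous f) (n : ℕ) : Continuous (orbitSegment f n) :=
  continuous_pi fun k => hf.iterate k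

theorem dynDist_nonneg : 0 ≤ dynDist f n x y := by
  rw [dynDist_eq_dist_orbitSegment]
  exact dist_nonneg

theorem dynDist_self (f : Z → Z) (n : ℕ) (x : Z) : dynDist f n x x = 0 := by
  rw [dynDist_eq_dist_orbitSegment, dist_self]

theorem continuous_dynDist (hf : Continuous f) (n : ℕ) (x : Z) : Continuous (dynDist f n x) := by
  simp only [funext (dynDist_eq_dist_orbitSegment f n x)]
  exact continuous_const.dist (continuous_orbitSegment hf n)

theorem dynDist_comm (f : Z → Z) (n : ℕ) (x y : Z) : dynDist f n x y = dynDist f n y x := by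
  simp only [dynDist_eq_dist_orbitSegment, dist_comm]

theorem dynDist_triangle (f : Z → Z) (n : ℕ) (x y z : Z) :
    dynDist f n x z ≤ dynDist f n x y + dynDist f n y z := by
  simp only [dynDist_eq_dist_orbitSegment]
  exact dist_triangle _ _ _

theorem dist_iterate_le_dynDist {k : ℕ} (hk : k < n) :
    dist (f^[k] x) (f^[k] y) ≤ dynDist f n x y := by
  rw [dynDist_eq_dist_orbitSegment]
  exact dist_le_pi_dist (orbitSegment f n x) (orbitSegment f n y) ⟨k, hk⟩

theorem dynDist_le_iff (hε : 0 ≤ ε) :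
    dynDist f n x y ≤ ε ↔ ∀ k < n, dist (f^[k] x) (f^[k] y) ≤ ε := by
  rw [dynDist_eq_dist_orbitSegment, dist_pi_le_iff hε, Fin.forall_iff]
  rfl

theorem dynDist_le_of_le (h : n ≤ m) : dynDist f n x y ≤ dynDist f m x y :=
  (dynDist_le_iff dynDist_nonneg).2 fun _ hk => dist_iterate_le_dynDist (hk.trans_le h)

theorem dynDist_iterate_le (hq : 0 < q) : dynDist f^[q] n x y ≤ dynDist f (q * n) x y := by
  refine (dynDist_le_iff dynDist_nonneg).2 fun k hk => ?_
  rw [← Function.iterate_mul]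
  exact dist_iterate_le_dynDist (Nat.mul_lt_mul_of_pos_left hk hq)

theorem dynDist_le_of_dynDist_iterate_le (hε : 0 ≤ ε)
    (hδ : ∀ x y, dist x y ≤ δ → dynDist f q x y ≤ ε) (hxy : dynDist f^[q] n x y ≤ δ) :
    dynDist f (q * n) x y ≤ ε := by
  refine (dynDist_le_iff hε).2 fun i hi => ?_
  have hq : 0 < q := Nat.pos_of_mul_pos_right (Nat.zero_lt_of_lt hi)
  have hin : i / q < n := (Nat.div_lt_iff_lt_mul hq).2 (by rwa [mul_comm])
  rw [← Nat.mod_add_div i q, Function.iterate_add_apply,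
    Function.iterate_add_apply (f := f) (i % q), Function.iterate_mul]
  refine (dist_iterate_le_dynDist (Nat.mod_lt i hq)).trans (hδ _ _ ?_)
  exact (dist_iterate_le_dynDist hin).trans hxy

theorem exists_pos_forall_dist_le_dynDist_le [CompactSpace Z] (hf : Continuous f) (hε : 0 < ε)
    (n : ℕ) : ∃ δ > 0, ∀ x y, dist x y ≤ δ → dynDist f n x y ≤ ε := by
  obtain ⟨δ, hδ, h⟩ := Metric.uniformContinuous_iff.1
    (CompactSpace.uniformContinuous_of_continuous (continuous_orbitSegment hf n)) ε hε
  refine ⟨δ / 2, half_pos hδ, fun x y hxy => ?_⟩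
  rw [dynDist_eq_dist_orbitSegment]
  exact (h (hxy.trans_lt (half_lt_self hδ))).le

end DynamicalDistance

section CoveringNumber

variable {f g : Z → Z} {m n N : ℕ} {δ ε : ℝ}

theorem coverNum_le_card {s : Finset Z} (hs : (univ : Set Z) ⊆ ⋃ c ∈ s, {y | dynDist f n c y ≤ ε}) :
    coverNum f n univ ε ≤ s.card :=
  Nat.sInf_le ⟨s, rfl, hs⟩

theorem exists_card_eq_coverNum [CompactSpace Z] (hf : Continuous f) (hε : 0 < ε) (n : ℕ) :
    ∃ s : Finset Z, s.card = coverNum f n univ ε ∧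
      (univ : Set Z) ⊆ ⋃ c ∈ s, {y | dynDist f n c y ≤ ε} := by
  suffices h : {m : ℕ | ∃ s : Finset Z, s.card = m ∧
      (univ : Set Z) ⊆ ⋃ c ∈ s, {y | dynDist f n c y ≤ ε}}.Nonempty from Nat.sInf_mem h
  have hnhds : ∀ c ∈ (univ : Set Z), {y | dynDist f n c y ≤ ε} ∈ 𝓝 c := fun c _ =>
    (continuous_dynDist hf n c).continuousAt.preimage_mem_nhds
      (Iic_mem_nhds ((dynDist_self f n c).symm ▸ hε))
  obtain ⟨s, -, hs⟩ := isCompact_univ.elim_nhds_subcover _ hnhds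
  exact ⟨s.card, s, rfl, hs⟩

theorem coverNum_le_coverNum [CompactSpace Z] (hg : Continuous g) (hδ : 0 < δ)
    (h : ∀ x y, dynDist g m x y ≤ δ → dynDist f n x y ≤ ε) :
    coverNum f n univ ε ≤ coverNum g m univ δ := by
  obtain ⟨s, hs, hcov⟩ := exists_card_eq_coverNum hg hδ m
  exact hs ▸ coverNum_le_card (hcov.trans (iUnion₂_mono fun c _ y hy => h c y hy))

theorem le_coverNum_of_separated [CompactSpace Z] (hf : Continuous f) (hε : 0 < ε) {y : ℕ → Z}
    (hy : ∀ i < N, ∀ j < N, i ≠ j → 2 * ε < dynDist f n (y i) (y j)) :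
    N ≤ coverNum f n univ ε := by
  obtain ⟨s, hs, hcov⟩ := exists_card_eq_coverNum hf hε n
  choose c hcs hc using fun i => mem_iUnion₂.1 (hcov (mem_univ (y i)))
  have hinj : Set.InjOn c (Finset.range N) := by
    intro i hi j hj hij
    by_contra hne
    refine (hy i (Finset.mem_range.1 hi) j (Finset.mem_range.1 hj) hne).not_ge ?_
    calc dynDist f n (y i) (y j) ≤ dynDist f n (y i) (c i) + dynDist f n (c j) (y j) :=
          hij ▸ dynDist_triangle f n _ _ _
      _ ≤ ε + ε := add_le_add ((dynDist_comm f n _ _).trans_le (hc i)) (hc j)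
      _ = 2 * ε := by ring
  simpa [hs] using Finset.card_le_card_of_injOn c (fun i _ => hcs i) hinj

end CoveringNumber

section PolynomialEntropy

variable {f : Z → Z}

theorem tendsto_log_mul_div_log {c : ℝ} (hc : 0 < c) :
    Tendsto (fun n : ℕ => Real.log (c * n) / Real.log n) atTop (𝓝 1) := by
  have hlog : Tendsto (fun n : ℕ => Real.log n) atTop atTop :=
    Real.tendsto_log_atTop.comp tendsto_natCast_atTop_atTop
  have h : Tendsto (fun n : ℕ => Real.log c / Real.log n + 1) atTop (𝓝 (0 + 1)) :=
    (tendsto_const_nhds.div_atTop hlog).add_const 1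
  rw [zero_add] at h
  refine h.congr' ?_
  filter_upwards [eventually_gt_atTop 1] with n hn
  have hn' : (1 : ℝ) < n := by exact_mod_cast hn
  rw [Real.log_mul hc.ne' (by positivity), add_div, div_self (Real.log_pos hn').ne']

theorem limsup_log_div_log_le_one {u : ℕ → ℕ} {C : ℝ}
    (h : ∀ᶠ n in atTop, (u n : ℝ) ≤ C * n) :
    atTop.limsup (fun n : ℕ => ((Real.log (u n) / Real.log n : ℝ) : EReal)) ≤ 1 := by
  have hC : 0 < max C 1 := lt_max_of_lt_right one_pos
  have hbound : ∀ᶠ n : ℕ in atTop, ((Real.log (u n) / Real.log n : ℝ) : EReal) ≤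
      ((Real.log (max C 1 * n) / Real.log n : ℝ) : EReal) := by
    filter_upwards [h, eventually_gt_atTop 1] with n hn hn1
    have hn1' : (1 : ℝ) < n := by exact_mod_cast hn1
    have hCn : 1 ≤ max C 1 * n := one_le_mul_of_one_le_of_one_le (le_max_right _ _) hn1'.le
    rw [EReal.coe_le_coe_iff]
    refine div_le_div_of_nonneg_right ?_ (Real.log_nonneg hn1'.le)
    rcases Nat.eq_zero_or_pos (u n) with h0 | hpos
    · simpa [h0] using Real.log_nonneg hCn
    · exact Real.log_le_log (by exact_mod_cast hpos)
        (hn.trans (mul_le_mul_of_nonneg_right (le_max_left _ _) (by positivity)))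
  calc _ ≤ atTop.limsup (fun n : ℕ => ((Real.log (max C 1 * n) / Real.log n : ℝ) : EReal)) :=
        limsup_le_limsup hbound
    _ = 1 := (EReal.tendsto_coe.2 (tendsto_log_mul_div_log hC)).limsup_eq

theorem one_le_limsup_log_div_log {u : ℕ → ℕ} {c : ℝ} (hc : 0 < c)
    (h : ∀ᶠ n in atTop, c * n ≤ (u n : ℝ)) :
    1 ≤ atTop.limsup (fun n : ℕ => ((Real.log (u n) / Real.log n : ℝ) : EReal)) := by
  have hbound : ∀ᶠ n : ℕ in atTop, ((Real.log (c * n) / Real.log n : ℝ) : EReal) ≤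
      ((Real.log (u n) / Real.log n : ℝ) : EReal) := by
    filter_upwards [h, eventually_gt_atTop 1] with n hn hn1
    have hn1' : (1 : ℝ) < n := by exact_mod_cast hn1
    rw [EReal.coe_le_coe_iff]
    exact div_le_div_of_nonneg_right (Real.log_le_log (by positivity) hn)
      (Real.log_nonneg hn1'.le)
  calc (1 : EReal) = atTop.limsup (fun n : ℕ => ((Real.log (c * n) / Real.log n : ℝ) : EReal)) :=
        (EReal.tendsto_coe.2 (tendsto_log_mul_div_log hc)).limsup_eq.symm
    _ ≤ _ := limsup_le_limsup hbound

theorem hpol_eq_one_of_linear_bounds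
    (hup : ∀ ε > 0, ∃ C : ℝ, ∀ᶠ n in atTop, (coverNum f n univ ε : ℝ) ≤ C * n)
    (hlow : ∃ ε > 0, ∃ c > 0, ∀ᶠ n in atTop, c * n ≤ (coverNum f n univ ε : ℝ)) :
    hpol f = 1 := by
  refine le_antisymm (iSup_le fun ε => ?_) ?_
  · obtain ⟨C, hC⟩ := hup ε.1 ε.2
    exact limsup_log_div_log_le_one hC
  · obtain ⟨ε, hε, c, hc, hlow⟩ := hlow
    exact (one_le_limsup_log_div_log hc hlow).trans (le_iSup_of_le ⟨ε, hε⟩ le_rfl)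

theorem hpol_eq_one_of_iterate [CompactSpace Z] (hf : Continuous f) {q : ℕ} (hq : 0 < q)
    (hup : ∀ ε > 0, ∃ C : ℕ, ∀ n, coverNum f^[q] n univ ε ≤ C * (n + 1))
    (hlow : ∃ ε > 0, ∀ n, n ≤ coverNum f^[q] n univ ε) :
    hpol f = 1 := by
  refine hpol_eq_one_of_linear_bounds (fun ε hε => ?_) ?_
  · obtain ⟨δ, hδ, hδε⟩ := exists_pos_forall_dist_le_dynDist_le hf hε q
    obtain ⟨C, hC⟩ := hup δ hδ
    refine ⟨2 * C, eventually_ge_atTop 1 |>.mono fun n hn => ?_⟩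
    have hcomp : coverNum f n univ ε ≤ C * (n + 1) :=
      calc coverNum f n univ ε ≤ coverNum f^[q] n univ δ :=
            coverNum_le_coverNum (hf.iterate q) hδ fun x y hxy =>
              (dynDist_le_of_le (Nat.le_mul_of_pos_left n hq)).trans
                (dynDist_le_of_dynDist_iterate_le hε.le hδε hxy)
        _ ≤ C * (n + 1) := hC n
    have hn' : (1 : ℝ) ≤ n := by exact_mod_cast hn
    calc (coverNum f n univ ε : ℝ) ≤ C * (n + 1) := by exact_mod_cast hcomp
      _ ≤ 2 * C * n := by nlinarith [(Nat.cast_nonneg C : (0 : ℝ) ≤ C)]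
  · obtain ⟨ε, hε, hlow⟩ := hlow
    refine ⟨ε, hε, 1 / (2 * q), by positivity, eventually_ge_atTop q |>.mono fun N hN => ?_⟩
    have hcomp : N / q ≤ coverNum f N univ ε :=
      calc N / q ≤ coverNum f^[q] (N / q) univ ε := hlow _
        _ ≤ coverNum f N univ ε := coverNum_le_coverNum hf hε fun x y hxy =>
            dynDist_iterate_le hq |>.trans <| (dynDist_le_of_le (Nat.mul_div_le N q)).trans hxy
    have hNq : N < 2 * q * (N / q) := by
      have := Nat.lt_mul_div_succ N hq
      have := (Nat.one_le_div_iff hq).2 hN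
      nlinarith
    have hq' : (0 : ℝ) < q := by exact_mod_cast hq
    calc 1 / (2 * q) * (N : ℝ) ≤ (N / q : ℕ) := by
          rw [div_mul_eq_mul_div, one_mul, div_le_iff₀ (by positivity)]
          exact_mod_cast (by linarith : N ≤ N / q * (2 * q))
      _ ≤ coverNum f N univ ε := by exact_mod_cast hcomp

end PolynomialEntropy

section Circle

theorem dist_coe_le_abs_sub (u v : ℝ) : dist (u : Circle1) v ≤ |u - v| := by
  rw [dist_eq_norm, ← AddCircle.coe_sub, UnitAddCircle.norm_eq]
  simpa using round_le (u - v) 0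

theorem le_dist_coe_of_le_abs_sub {u v δ D : ℝ} (hδ : δ ≤ |u - v|) (hD : |u - v| ≤ D) :
    min δ (1 - D) ≤ dist (u : Circle1) v := by
  rw [dist_eq_norm, ← AddCircle.coe_sub, UnitAddCircle.norm_eq]
  rcases eq_or_ne (round (u - v)) 0 with h0 | h0
  · rw [h0, Int.cast_zero, sub_zero]
    exact min_le_of_left_le hδ
  · have h1 : (1 : ℝ) ≤ |(round (u - v) : ℝ)| := by exact_mod_cast Int.one_le_abs h0
    refine min_le_of_right_le ?_
    linarith [abs_sub_abs_le_abs_sub (round (u - v) : ℝ) (u - v),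
      abs_sub_comm (u - v) (round (u - v) : ℝ)]

theorem exists_mem_Ico_coe_eq (a : ℝ) (z : Circle1) : ∃ x ∈ Ico a (a + 1), (x : Circle1) = z := by
  obtain ⟨x, rfl⟩ := QuotientAddGroup.mk_surjective z
  refine ⟨toIcoMod one_pos a x, toIcoMod_mem_Ico one_pos a x, ?_⟩
  rw [← self_sub_toIcoDiv_zsmul]
  simp

end Circle

namespace CircleDeg1Lift

theorem mapsTo_Icc (φ : CircleDeg1Lift) {a : ℝ} (ha : φ a = a) :
    MapsTo φ (Icc a (a + 1)) (Icc a (a + 1)) := fun _ hx =>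
  ⟨ha ▸ φ.monotone hx.1, (φ.map_add_one a).trans (by rw [ha]) ▸ φ.monotone hx.2⟩

/-- The orbit of `b` moves monotonically towards the fixed point of the form `a + m` on the side to
which `φ` moves `b`, and that point lies within distance `1` of `b`. -/
theorem exists_pos_le_dist_iterate (φ : CircleDeg1Lift) {a b : ℝ} (ha : φ a = a) (hb : φ b ≠ b) :
    ∃ η > 0, ∀ k, 1 ≤ k → η ≤ dist ((φ^[k] b : ℝ) : Circle1) b := by
  rcases hb.lt_or_gt with hlt | hgt
  · set c := a + ⌊b - a⌋
    have hc : φ c = c := by rw [φ.map_add_int, ha]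
    have hcb : c < b := lt_of_le_of_ne (by linarith [Int.floor_le (b - a)]) fun h => hb (h ▸ hc)
    have hbc : b < c + 1 := by linarith [Int.lt_floor_add_one (b - a)]
    refine ⟨min (b - φ b) (1 - (b - c)), lt_min (by linarith) (by linarith), fun k hk => ?_⟩
    have h1 : φ^[k] b ≤ φ b := φ.monotone.antitone_iterate_of_map_le hlt.le hk
    have h2 : c ≤ φ^[k] b := Function.iterate_fixed hc k ▸ φ.monotone.iterate k hcb.le
    apply le_dist_coe_of_le_abs_sub <;> rw [abs_of_nonpos (by linarith)] <;> linarith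
  · set c := a + ⌈b - a⌉
    have hc : φ c = c := by rw [φ.map_add_int, ha]
    have hbc : b < c := lt_of_le_of_ne (by linarith [Int.le_ceil (b - a)]) fun h => hb (h ▸ hc)
    have hcb : c < b + 1 := by linarith [Int.ceil_lt_add_one (b - a)]
    refine ⟨min (φ b - b) (1 - (c - b)), lt_min (by linarith) (by linarith), fun k hk => ?_⟩
    have h1 : φ b ≤ φ^[k] b := φ.monotone.monotone_iterate_of_le_map hgt.le hk
    have h2 : φ^[k] b ≤ c := Function.iterate_fixed hc k ▸ φ.monotone.iterate k hbc.le
    apply le_dist_coe_of_le_abs_sub <;> rw [abs_of_nonneg (by linarith)] <;> linarith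

theorem exists_unit_eq_pow_sub (Φ : CircleDeg1Lift) (hc : Continuous Φ) (hm : StrictMono Φ)
    (p : ℤ) (q : ℕ) : ∃ G : CircleDeg1Liftˣ, ∀ x, G x = (Φ ^ q) x - p := by
  set Ψ : CircleDeg1Lift := ↑(translate (Multiplicative.ofAdd (-(p : ℝ)))) * Φ ^ q
  have hΨ : ∀ x, Ψ x = (Φ ^ q) x - p := fun x => by
    simp only [Ψ, mul_apply, translate_apply]
    ring
  have hcont : Continuous Ψ := by
    rw [show ⇑Ψ = fun x => (Φ ^ q) x - p from funext hΨ]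
    exact (Φ.continuous_pow hc q).sub continuous_const
  have hinj : Function.Injective Ψ := fun x y hxy => by
    rw [hΨ, hΨ, sub_left_inj, coe_pow] at hxy
    exact (hm.iterate q).injective hxy
  obtain ⟨G, hG⟩ := isUnit_iff_bijective.2 ⟨hinj, (continuous_iff_surjective Ψ).1 hcont⟩
  exact ⟨G, hG ▸ hΨ⟩

/-- If `Φ^q` is the translation by `p`, the average `H = (∑_{k < q} Φ^k) / q` conjugates `Φ` to the
translation by `p / q`. -/
theorem exists_unit_semiconj_add_of_pow_eq_add (Φ : CircleDeg1Lift) (hc : Continuous Φ)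
    (hm : StrictMono Φ) {p : ℤ} {q : ℕ} (hq : 0 < q) (hper : ∀ x, (Φ ^ q) x = x + p) :
    ∃ H : CircleDeg1Liftˣ, ∀ x, H (Φ x) = H x + p / q := by
  have hq' : (0 : ℝ) < q := by exact_mod_cast hq
  let H : CircleDeg1Lift :=
    { toFun := fun x => (∑ k ∈ Finset.range q, (Φ ^ k) x) / q
      monotone' := fun x y hxy => div_le_div_of_nonneg_right
        (Finset.sum_le_sum fun k _ => (Φ ^ k).monotone hxy) hq'.le
      map_add_one' := fun x => by
        simp only [map_add_one, Finset.sum_add_distrib, Finset.sum_const, Finset.card_range,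
          nsmul_eq_mul, mul_one]
        field_simp }
  have hHmono : StrictMono H := fun x y hxy => div_lt_div_of_pos_right
    (Finset.sum_lt_sum_of_nonempty (Finset.nonempty_range_iff.2 hq.ne') fun k _ => by
      simpa only [coe_pow] using hm.iterate k hxy) hq'
  have hHcont : Continuous H :=
    (continuous_finsetSum _ fun k _ => Φ.continuous_pow hc k).div_const _
  obtain ⟨H', hH'⟩ :=
    isUnit_iff_bijective.2 ⟨hHmono.injective, (continuous_iff_surjective H).1 hHcont⟩
  refine ⟨H', fun x => ?_⟩
  have htele := Finset.sum_range_sub (fun k => (Φ ^ k) x) q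
  simp only [pow_succ, mul_apply, pow_zero, coe_one, id, hper, Finset.sum_sub_distrib] at htele
  rw [hH']
  change (∑ k ∈ Finset.range q, (Φ ^ k) (Φ x)) / q =
    (∑ k ∈ Finset.range q, (Φ ^ k) x) / q + p / q
  rw [← add_div]
  congr 1
  linarith

def toCircleMap (G : CircleDeg1Lift) : Circle1 → Circle1 :=
  Function.Periodic.lift (f := fun x : ℝ => (G x : Circle1)) (c := 1) fun x => by
    simp [G.map_add_one]

theorem toCircleMap_coe (G : CircleDeg1Lift) (x : ℝ) : G.toCircleMap x = G x := rfl

theorem continuous_toCircleMap {G : CircleDeg1Lift} (hG : Continuous G) :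
    Continuous G.toCircleMap :=
  continuous_quot_lift _ ((AddCircle.continuous_mk' 1).comp hG)

def unitsToCircleHomeomorph (G : CircleDeg1Liftˣ) : Circle1 ≃ₜ Circle1 where
  toFun := toCircleMap G
  invFun := toCircleMap ↑G⁻¹
  left_inv z := by
    obtain ⟨x, rfl⟩ := QuotientAddGroup.mk_surjective z
    simp only [toCircleMap_coe, units_inv_apply_apply]
  right_inv z := by
    obtain ⟨x, rfl⟩ := QuotientAddGroup.mk_surjective z
    simp only [toCircleMap_coe, units_apply_inv_apply]
  continuous_toFun := continuous_toCircleMap <| by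
    simpa only [coe_toOrderIso] using (toOrderIso G).continuous
  continuous_invFun := continuous_toCircleMap <| by
    simpa only [coe_toOrderIso] using (toOrderIso G⁻¹).continuous

theorem conjRotCircle_of_semiconj {f : Circle1 ≃ₜ Circle1} {F : ℝ → ℝ}
    (hFf : Function.Semiconj ((↑) : ℝ → Circle1) F f) (H : CircleDeg1Liftˣ) (r : ℝ)
    (hH : ∀ x, H (F x) = H x + r) : ConjRotCircle f := by
  refine ⟨unitsToCircleHomeomorph H, r, fun z => ?_⟩
  obtain ⟨x, rfl⟩ := QuotientAddGroup.mk_surjective z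
  change toCircleMap H (f (toCircleMap ↑H⁻¹ x)) = _
  rw [toCircleMap_coe, ← hFf.eq, toCircleMap_coe, hH, units_apply_inv_apply]
  rfl

end CircleDeg1Lift

theorem exists_int_forall_map_add_one {F : ℝ → ℝ} (hF : Continuous F) {g : Circle1 → Circle1}
    (hFg : Function.Semiconj ((↑) : ℝ → Circle1) F g) : ∃ c : ℤ, ∀ x, F (x + 1) = F x + c := by
  have hmem : ∀ x, F (x + 1) - F x ∈ AddSubgroup.zmultiples (1 : ℝ) := fun x => by
    rw [← QuotientAddGroup.eq_iff_sub_mem]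
    change (F (x + 1) : Circle1) = F x
    rw [hFg.eq, hFg.eq, AddCircle.coe_add_period]
  obtain ⟨c, hc⟩ := AddSubgroup.mem_zmultiples_iff.1 (hmem 0)
  refine ⟨c, fun x => ?_⟩
  have hdisc : IsDiscrete (AddSubgroup.zmultiples (1 : ℝ) : Set ℝ) :=
    isDiscrete_iff_discreteTopology.2 <|
      inferInstanceAs (DiscreteTopology (AddSubgroup.zmultiples (1 : ℝ)))
  have := isPreconnected_univ.constant_of_mapsTo hdisc
    ((hF.comp (continuous_add_const 1)).sub hF).continuousOn (fun x _ => hmem x) (mem_univ x)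
    (mem_univ 0)
  simp only [Pi.sub_apply, Function.comp_apply, zsmul_eq_mul, mul_one, zero_add] at this hc
  linarith

/-- If `F (x + 1) = F x + c` with `c ≥ 2`, then `F y = F 0 + 1` for some `y ∈ (0, 1)`, and `f`
would identify `y` with `0`. -/
theorem map_add_one_of_semiconj (f : Circle1 ≃ₜ Circle1) {F : ℝ → ℝ} (hF : Continuous F)
    (hmono : StrictMono F) (hFf : Function.Semiconj ((↑) : ℝ → Circle1) F f) (x : ℝ) :
    F (x + 1) = F x + 1 := by
  obtain ⟨c, hc⟩ := exists_int_forall_map_add_one hF hFf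
  have hF1 : F 1 = F 0 + c := by simpa using hc 0
  have hc0 : 0 < c := by
    have := hmono (zero_lt_one' ℝ)
    exact_mod_cast (by linarith : (0 : ℝ) < c)
  obtain rfl | hc2 : c = 1 ∨ 2 ≤ c := by omega
  · simpa using hc x
  exfalso
  have hc2' : (2 : ℝ) ≤ c := by exact_mod_cast hc2
  obtain ⟨y, hy, hFy⟩ := intermediate_value_Icc zero_le_one hF.continuousOn
    (show F 0 + 1 ∈ Icc (F 0) (F 1) from ⟨by linarith, by linarith⟩)
  have hy0 : y ≠ 0 := by
    rintro rfl
    linarith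
  have hy1 : y ≠ 1 := by
    rintro rfl
    linarith
  have hcoe : (y : Circle1) = (0 : ℝ) :=
    f.injective (by rw [← hFf.eq, ← hFf.eq, hFy, AddCircle.coe_add_period])
  rw [AddCircle.coe_eq_coe_iff_of_mem_Ico (a := 0) ⟨hy.1, by linarith [lt_of_le_of_ne hy.2 hy1]⟩
    ⟨le_rfl, by norm_num⟩] at hcoe
  exact hy0 hcoe

theorem exists_nat_div_mem_Ioo {a u v : ℝ} {m : ℕ} (hm : 0 < m) (hau : a ≤ u) (hva : v ≤ a + 1)
    (huv : 1 / m < v - u) : ∃ j ≤ m, u < a + j / m ∧ a + j / m < v := by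
  have hm' : (0 : ℝ) < m := by exact_mod_cast hm
  rw [div_lt_iff₀ hm'] at huv
  have h1 : (u - a) * m < (⌊(u - a) * m⌋₊ + 1 : ℕ) := by push_cast; exact Nat.lt_floor_add_one _
  have h2 : ((⌊(u - a) * m⌋₊ + 1 : ℕ) : ℝ) ≤ (u - a) * m + 1 := by
    push_cast
    linarith [Nat.floor_le (mul_nonneg (sub_nonneg.2 hau) hm'.le)]
  refine ⟨⌊(u - a) * m⌋₊ + 1, ?_, ?_, ?_⟩
  · have : ((⌊(u - a) * m⌋₊ + 1 : ℕ) : ℝ) ≤ m := by nlinarith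
    exact_mod_cast this
  · rw [← sub_lt_iff_lt_add', lt_div_iff₀ hm']
    exact h1
  · rw [← lt_sub_iff_add_lt', div_lt_iff₀ hm']
    nlinarith

noncomputable def preimageGrid (G : CircleDeg1Liftˣ) (a : ℝ) (m n : ℕ) : Finset ℝ :=
  (Finset.range (n + 1) ×ˢ Finset.range (m + 1)).image fun kj =>
    (⇑(↑G⁻¹ : CircleDeg1Lift))^[kj.1] (a + kj.2 / m)

theorem card_preimageGrid_le (G : CircleDeg1Liftˣ) (a : ℝ) (m n : ℕ) :
    (preimageGrid G a m n).card ≤ (m + 1) * (n + 1) :=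
  Finset.card_image_le.trans (by simp [mul_comm])

/-- If `G` fixes `a`, the largest grid point `c ≤ x` shadows `x`: no grid point can separate
`G^[k] c` from `G^[k] x`, since its `G⁻ᵏ`-preimage would lie between `c` and `x`. -/
theorem exists_mem_preimageGrid_forall_abs_sub_le (G : CircleDeg1Liftˣ) {a : ℝ} (ha : G a = a)
    {m : ℕ} (hm : 0 < m) (n : ℕ) {x : ℝ} (hx : x ∈ Icc a (a + 1)) :
    ∃ c ∈ preimageGrid G a m n, ∀ k ≤ n, |G^[k] c - G^[k] x| ≤ 1 / m := by
  classical
  have hinv : (↑G⁻¹ : CircleDeg1Lift) a = a := by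
    simpa [ha] using CircleDeg1Lift.units_inv_apply_apply G a
  have hleft : Function.LeftInverse G (↑G⁻¹ : CircleDeg1Lift) :=
    CircleDeg1Lift.units_apply_inv_apply G
  have hgrid : ∀ c ∈ preimageGrid G a m n, c ∈ Icc a (a + 1) := by
    simp only [preimageGrid, Finset.mem_image, Finset.mem_product, Finset.mem_range]
    rintro _ ⟨⟨k, j⟩, ⟨-, hj⟩, rfl⟩
    refine (CircleDeg1Lift.mapsTo_Icc _ hinv).iterate k ⟨?_, ?_⟩
    · exact le_add_of_nonneg_right (by positivity)
    · gcongr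
      exact div_le_one_of_le₀ (by exact_mod_cast Nat.lt_succ_iff.1 hj) (Nat.cast_nonneg m)
  have ha_mem : a ∈ (preimageGrid G a m n).filter (· ≤ x) := by
    refine Finset.mem_filter.2 ⟨Finset.mem_image.2 ⟨(0, 0), by simp, by simp⟩, hx.1⟩
  obtain ⟨c, hc, hcmax⟩ := Finset.exists_max_image _ id ⟨a, ha_mem⟩
  rw [Finset.mem_filter] at hc
  refine ⟨c, hc.1, fun k hk => ?_⟩
  have hmono : StrictMono (⇑G)^[k] := by
    rw [← CircleDeg1Lift.coe_toOrderIso]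
    exact (CircleDeg1Lift.toOrderIso G).strictMono.iterate k
  have hGmaps := (CircleDeg1Lift.mapsTo_Icc (↑G) ha).iterate k
  rw [abs_sub_comm, abs_of_nonneg (sub_nonneg.2 (hmono.monotone hc.2))]
  by_contra! hgap
  obtain ⟨j, hj, hcj, hjx⟩ :=
    exists_nat_div_mem_Ioo hm (hGmaps (hgrid c hc.1)).1 (hGmaps hx).2 hgap
  set e := (⇑(↑G⁻¹ : CircleDeg1Lift))^[k] (a + j / m)
  have hGe : G^[k] e = a + j / m := hleft.iterate k _
  have he : e ∈ (preimageGrid G a m n).filter (· ≤ x) := by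
    refine Finset.mem_filter.2 ⟨Finset.mem_image.2 ⟨(k, j), ?_, rfl⟩, ?_⟩
    · simp only [Finset.mem_product, Finset.mem_range]
      omega
    · exact (hmono.lt_iff_lt.1 (hGe ▸ hjx)).le
  exact (hcmax e he).not_gt (hmono.lt_iff_lt.1 (hGe ▸ hcj))

theorem coverNum_le_of_lift_fixed {g : Circle1 → Circle1} {G : CircleDeg1Liftˣ}
    (hgG : Function.Semiconj ((↑) : ℝ → Circle1) G g) {a : ℝ} (ha : G a = a) {ε : ℝ}
    (hε : 0 < ε) : ∃ C : ℕ, ∀ n, coverNum g n univ ε ≤ C * (n + 1) := by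
  classical
  set m := ⌈ε⁻¹⌉₊
  have hm : 0 < m := Nat.ceil_pos.2 (inv_pos.2 hε)
  have hmε : 1 / (m : ℝ) ≤ ε := by
    rw [one_div]
    exact inv_le_of_inv_le₀ hε (Nat.le_ceil _)
  refine ⟨m + 1, fun n => ?_⟩
  have hcov : (univ : Set Circle1) ⊆ ⋃ c ∈ (preimageGrid G a m n).image ((↑) : ℝ → Circle1),
      {z | dynDist g n c z ≤ ε} := by
    intro z _
    obtain ⟨x, hx, rfl⟩ := exists_mem_Ico_coe_eq a z
    obtain ⟨c, hc, hcx⟩ :=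
      exists_mem_preimageGrid_forall_abs_sub_le G ha hm n (Ico_subset_Icc_self hx)
    refine mem_iUnion₂.2
      ⟨c, Finset.mem_image_of_mem _ hc, (dynDist_le_iff hε.le).2 fun k hk => ?_⟩
    rw [← (hgG.iterate_right k).eq, ← (hgG.iterate_right k).eq]
    exact (dist_coe_le_abs_sub _ _).trans ((hcx k hk.le).trans hmε)
  calc coverNum g n univ ε ≤ _ := coverNum_le_card hcov
    _ ≤ (preimageGrid G a m n).card := Finset.card_image_le
    _ ≤ (m + 1) * (n + 1) := card_preimageGrid_le G a m n

/-- The backward orbit `G⁻ⁱ b` is `(n, ε)`-separated: at time `i` the points `G⁻ⁱ b` and `G⁻ʲ b`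
(`i < j`) are at `b` and `G⁻⁽ʲ⁻ⁱ⁾ b`. -/
theorem le_coverNum_of_lift_not_fixed {g : Circle1 → Circle1} (hg : Continuous g)
    {G : CircleDeg1Liftˣ} (hgG : Function.Semiconj ((↑) : ℝ → Circle1) G g) {a b : ℝ}
    (ha : G a = a) (hb : G b ≠ b) : ∃ ε > 0, ∀ n, n ≤ coverNum g n univ ε := by
  set φ : CircleDeg1Lift := ↑G⁻¹
  have hleft : Function.LeftInverse G φ := CircleDeg1Lift.units_apply_inv_apply G
  have hφa : φ a = a := by simpa [ha] using CircleDeg1Lift.units_inv_apply_apply G a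
  have hφb : φ b ≠ b := fun h => hb (by simpa [h] using hleft b)
  obtain ⟨η, hη, hsep⟩ := φ.exists_pos_le_dist_iterate hφa hφb
  have hsep' : ∀ n i j, i < j → j < n →
      η ≤ dynDist g n ((φ^[i] b : ℝ) : Circle1) ((φ^[j] b : ℝ) : Circle1) := by
    intro n i j hij hjn
    obtain ⟨k, rfl⟩ := Nat.exists_eq_add_of_lt hij
    have hback : G^[i] (φ^[i + (k + 1)] b) = φ^[k + 1] b := by
      rw [Function.iterate_add_apply]
      exact hleft.iterate i _
    calc η ≤ dist ((φ^[k + 1] b : ℝ) : Circle1) b := hsep (k + 1) le_add_self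
      _ = dist (g^[i] ((φ^[i] b : ℝ) : Circle1)) (g^[i] ((φ^[i + k + 1] b : ℝ) : Circle1)) := by
        rw [← (hgG.iterate_right i).eq, ← (hgG.iterate_right i).eq, dist_comm, add_assoc, hback,
          hleft.iterate i b]
      _ ≤ _ := dist_iterate_le_dynDist (by omega)
  refine ⟨η / 3, by positivity, fun n => le_coverNum_of_separated hg (by positivity)
    (y := fun i => ((φ^[i] b : ℝ) : Circle1)) fun i hi j hj hij => ?_⟩
  rcases hij.lt_or_gt with h | h
  · linarith [hsep' n i j h hj]
  · linarith [hsep' n j i h hi, dynDist_comm g n (φ^[i] b : Circle1) (φ^[j] b : Circle1)]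

/-- Orientation-preserving circle homeomorphism with rational rotation number,
not conjugate to a rotation: its polynomial entropy equals 1. -/
theorem hpol_circle_homeo_rational (f : Circle1 ≃ₜ Circle1)
    (F : ℝ → ℝ) (hFcont : Continuous F) (hFmono : StrictMono F)
    (hFlift : ∀ x : ℝ, f ((x : ℝ) : Circle1) = ((F x : ℝ) : Circle1))
    (ρ : ℝ)
    (hρ : ∀ x : ℝ, Filter.Tendsto (fun n : ℕ => F^[n] x / n) Filter.atTop (nhds ρ))
    (hρnat : ∃ q : ℚ, ρ = (q : ℝ))
    (hnconj : ¬ ConjRotCircle f) :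
    hpol (⇑f) = 1 := by
  obtain ⟨r, rfl⟩ := hρnat
  have hFf : Function.Semiconj ((↑) : ℝ → Circle1) F f := fun x => (hFlift x).symm
  let Φ : CircleDeg1Lift := ⟨⟨F, hFmono.monotone⟩, map_add_one_of_semiconj f hFcont hFmono hFf⟩
  have hτ : Φ.translationNumber = r.num / r.den := by
    rw [← Rat.cast_def]
    refine tendsto_nhds_unique Φ.tendsto_translation_number₀ ?_
    exact (hρ 0).congr fun n => by rw [CircleDeg1Lift.coe_pow]; rfl
  obtain ⟨a, ha⟩ := (Φ.translationNumber_eq_rat_iff hFcont r.den_pos).1 hτ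
  obtain ⟨G, hG⟩ := Φ.exists_unit_eq_pow_sub hFcont hFmono r.num r.den
  have hgG : Function.Semiconj ((↑) : ℝ → Circle1) G f^[r.den] := fun x => by
    rw [hG, CircleDeg1Lift.coe_pow, ← (hFf.iterate_right _).eq]
    show ((F^[r.den] x - r.num : ℝ) : Circle1) = F^[r.den] x
    simp
  have hGa : G a = a := by rw [hG, ha, add_sub_cancel_right]
  by_cases hfix : ∀ x, G x = x
  · obtain ⟨H, hH⟩ := Φ.exists_unit_semiconj_add_of_pow_eq_add hFcont hFmono r.den_pos
      fun x => by linarith [hG x, hfix x]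
    exact absurd (CircleDeg1Lift.conjRotCircle_of_semiconj hFf H _ hH) hnconj
  push Not at hfix
  obtain ⟨b, hb⟩ := hfix
  exact hpol_eq_one_of_iterate f.continuous r.den_pos
    (fun ε hε => coverNum_le_of_lift_fixed hgG hGa hε)
    (le_coverNum_of_lift_not_fixed (f.continuous.iterate _) hgG hGa hb)
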